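/- A *-homomorphism approximately unitarily equivalent to id whose square is approximately inner is close to an automorphism: let A be a separable C*-algebra and σ̃ : A → A a *-homomorphism such that σ̃² is approximately unitarily equivalent to id_A. Then σ̃ is approximately unitarily equivalent to an automorphism of A. -/

import Mathlib

/-!
Elliott's approximate intertwining. For a unitary `u` of `A†` let `Ad u` be the induced inner
*-endomorphism of `A`. Since `σ ∘ Ad w = Ad (σ†(w)) ∘ σ`, the hypothesis `σ² ≈ id` can absorb any
unitary `w`: for every finite `F ⊆ A` and `ε > 0` there is `v` with `Ad v ∘ σ ∘ Ad w ∘ σ ≈ id`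
within `ε` on `F`. Choosing unitaries alternately, with tolerances `2⁻ⁿ` on finite sets that
exhaust dense sequences, produces contractions `fₙ = Ad uₙ ∘ σ` and `gₙ = Ad vₙ ∘ σ` with
`gₙ ∘ fₙ ≈ id` and `fₙ₊₁ ∘ gₙ ≈ id`. Both sequences then converge pointwise, to mutually inverse
*-homomorphisms, and the limit `θ` of `fₙ` is an automorphism that `σ` is approximately unitarily
equivalent to via the unitaries `uₙ`.
-/

open Filter Topology

/-- Approximate unitary equivalence of maps `A → B`, witnessed by a sequence of unitaries in
the minimal unitization `B† = Unitization ℂ B` of `B`. -/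
def ApproxUnitarilyEquiv {A B : Type*} [NonUnitalCStarAlgebra A] [NonUnitalCStarAlgebra B]
    (φ ψ : A → B) : Prop :=
  ∃ u : ℕ → unitary (Unitization ℂ B), ∀ a : A,
    Tendsto (fun n => ‖(u n : Unitization ℂ B) * (φ a : Unitization ℂ B) * star (u n : Unitization ℂ B)
      - (ψ a : Unitization ℂ B)‖) atTop (𝓝 0)

open Set Function
open scoped NNReal

theorem EquicontinuousAt.cauchySeq_of_mem_closure {X Y : Type*} [PseudoMetricSpace X]
    [PseudoMetricSpace Y] {F : ℕ → X → Y} {S : Set X} {x : X} (hF : EquicontinuousAt F x)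
    (hx : x ∈ closure S) (hS : ∀ y ∈ S, CauchySeq (F · y)) : CauchySeq (F · x) := by
  rw [Metric.cauchySeq_iff']
  intro ε hε
  obtain ⟨δ, hδ, hFδ⟩ := Metric.equicontinuousAt_iff.1 hF (ε / 3) (by positivity)
  obtain ⟨y, hyS, hxy⟩ := Metric.mem_closure_iff.1 hx δ hδ
  obtain ⟨N, hN⟩ := Metric.cauchySeq_iff'.1 (hS y hyS) (ε / 3) (by positivity)
  refine ⟨N, fun n hn => ?_⟩
  have hn' := hFδ y (by rwa [dist_comm]) n
  have hN' := hFδ y (by rwa [dist_comm]) N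
  calc dist (F n x) (F N x)
      ≤ dist (F n x) (F n y) + dist (F n y) (F N y) + dist (F N y) (F N x) := dist_triangle4 ..
    _ < ε := by rw [dist_comm (F N y)]; linarith [hN n hn]

theorem tendsto_apply_of_lipschitzWith {ι X Y : Type*} [PseudoMetricSpace X]
    [PseudoMetricSpace Y] {l : Filter ι} {F : ι → X → Y} {Φ : X → Y} {K : ℝ≥0}
    (hF : ∀ i, LipschitzWith K (F i)) (hΦ : ∀ x, Tendsto (F · x) l (𝓝 (Φ x)))
    {x : ι → X} {a : X} (hx : Tendsto x l (𝓝 a)) :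
    Tendsto (fun i => F i (x i)) l (𝓝 (Φ a)) := by
  rw [tendsto_iff_dist_tendsto_zero] at hx ⊢
  have hbound := (hx.const_mul (K : ℝ)).add (tendsto_iff_dist_tendsto_zero.1 (hΦ a))
  rw [mul_zero, zero_add] at hbound
  refine squeeze_zero (fun _ => dist_nonneg) (fun i => ?_) hbound
  calc dist (F i (x i)) (Φ a) ≤ dist (F i (x i)) (F i a) + dist (F i a) (Φ a) :=
        dist_triangle ..
    _ ≤ K * dist (x i) a + dist (F i a) (Φ a) := by gcongr; exact (hF i).dist_le_mul ..

structure IsApproxIntertwining {X Y : Type*} [PseudoMetricSpace X] [PseudoMetricSpace Y]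
    (f : ℕ → X → Y) (g : ℕ → Y → X) (F : ℕ → Set X) (G : ℕ → Set Y) (ε δ : ℕ → ℝ) : Prop where
  lipschitzWith_left : ∀ n, LipschitzWith 1 (f n)
  lipschitzWith_right : ∀ n, LipschitzWith 1 (g n)
  mapsTo_left : ∀ n, MapsTo (f n) (F n) (G n)
  mapsTo_right : ∀ n, MapsTo (g n) (G n) (F (n + 1))
  dist_right_left_le : ∀ n, ∀ x ∈ F n, dist (g n (f n x)) x ≤ ε n
  dist_left_right_le : ∀ n, ∀ y ∈ G n, dist (f (n + 1) (g n y)) y ≤ δ n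
  summable_left : Summable ε
  summable_right : Summable δ
  dense_left : Dense {x | ∀ᶠ n in atTop, x ∈ F n}
  dense_right : Dense {y | ∀ᶠ n in atTop, y ∈ G n}

namespace IsApproxIntertwining

section PseudoMetric

variable {X Y : Type*} [PseudoMetricSpace X] [PseudoMetricSpace Y] {f : ℕ → X → Y}
  {g : ℕ → Y → X} {F : ℕ → Set X} {G : ℕ → Set Y} {ε δ : ℕ → ℝ}

theorem flip (h : IsApproxIntertwining f g F G ε δ) :
    IsApproxIntertwining g (fun n => f (n + 1)) G (fun n => F (n + 1)) δ (fun n => ε (n + 1))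
    where
  lipschitzWith_left := h.lipschitzWith_right
  lipschitzWith_right n := h.lipschitzWith_left (n + 1)
  mapsTo_left := h.mapsTo_right
  mapsTo_right n := h.mapsTo_left (n + 1)
  dist_right_left_le := h.dist_left_right_le
  dist_left_right_le n := h.dist_right_left_le (n + 1)
  summable_left := h.summable_right
  summable_right := (summable_nat_add_iff 1).2 h.summable_left
  dense_left := h.dense_right
  dense_right := h.dense_left.mono fun x (hx : ∀ᶠ n in atTop, x ∈ F n) =>
    show ∀ᶠ n in atTop, x ∈ F (n + 1) from (tendsto_add_atTop_nat 1).eventually hx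

theorem dist_succ_apply_le (h : IsApproxIntertwining f g F G ε δ) {n : ℕ} {x : X}
    (hx : x ∈ F n) : dist (f (n + 1) x) (f n x) ≤ ε n + δ n := by
  calc dist (f (n + 1) x) (f n x)
      ≤ dist (f (n + 1) x) (f (n + 1) (g n (f n x))) + dist (f (n + 1) (g n (f n x))) (f n x) :=
        dist_triangle ..
    _ ≤ dist (g n (f n x)) x + δ n := by
        gcongr
        · simpa [dist_comm] using (h.lipschitzWith_left (n + 1)).dist_le_mul x (g n (f n x))
        · exact h.dist_left_right_le n _ (h.mapsTo_left n hx)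
    _ ≤ ε n + δ n := by gcongr; exact h.dist_right_left_le n x hx

theorem cauchySeq_apply (h : IsApproxIntertwining f g F G ε δ) (x : X) :
    CauchySeq (f · x) := by
  refine ((LipschitzWith.uniformEquicontinuous f 1 h.lipschitzWith_left).equicontinuous x
    ).cauchySeq_of_mem_closure (h.dense_left.closure_eq ▸ mem_univ x) fun y hy => ?_
  obtain ⟨N, hN⟩ := eventually_atTop.1 hy
  rw [← cauchySeq_shift N]
  refine cauchySeq_of_dist_le_of_summable (fun n => ε (n + N) + δ (n + N)) (fun n => ?_)
    (((summable_nat_add_iff N).2 h.summable_left).add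
      ((summable_nat_add_iff N).2 h.summable_right))
  rw [dist_comm, Nat.succ_add]
  exact h.dist_succ_apply_le (hN _ le_add_self)

end PseudoMetric

variable {X Y : Type*} [MetricSpace X] [MetricSpace Y] {f : ℕ → X → Y} {g : ℕ → Y → X}
  {F : ℕ → Set X} {G : ℕ → Set Y} {ε δ : ℕ → ℝ}

theorem exists_tendsto [CompleteSpace Y] (h : IsApproxIntertwining f g F G ε δ) :
    ∃ Φ : X → Y, ∀ x, Tendsto (f · x) atTop (𝓝 (Φ x)) := by
  choose Φ hΦ using fun x => cauchySeq_tendsto_of_complete (h.cauchySeq_apply x)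
  exact ⟨Φ, hΦ⟩

theorem leftInverse_of_tendsto (h : IsApproxIntertwining f g F G ε δ) {Φ : X → Y} {Ψ : Y → X}
    (hΦ : ∀ x, Tendsto (f · x) atTop (𝓝 (Φ x)))
    (hΨ : ∀ y, Tendsto (g · y) atTop (𝓝 (Ψ y))) : LeftInverse Ψ Φ := by
  have hΦc : Continuous Φ := (tendsto_pi_nhds.2 hΦ).continuous_of_equicontinuous
    (LipschitzWith.uniformEquicontinuous f 1 h.lipschitzWith_left).equicontinuous
  have hΨc : Continuous Ψ := (tendsto_pi_nhds.2 hΨ).continuous_of_equicontinuous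
    (LipschitzWith.uniformEquicontinuous g 1 h.lipschitzWith_right).equicontinuous
  refine congrFun (Continuous.ext_on h.dense_left (hΨc.comp hΦc) continuous_id fun x hx => ?_)
  refine tendsto_nhds_unique (tendsto_apply_of_lipschitzWith h.lipschitzWith_right hΨ (hΦ x)) ?_
  rw [tendsto_iff_dist_tendsto_zero]
  refine squeeze_zero' (Eventually.of_forall fun _ => dist_nonneg) ?_
    h.summable_left.tendsto_atTop_zero
  filter_upwards [hx] with n hn using h.dist_right_left_le n x hn

theorem exists_bijective_tendsto [CompleteSpace X] [CompleteSpace Y]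
    (h : IsApproxIntertwining f g F G ε δ) :
    ∃ Φ : X → Y, Bijective Φ ∧ ∀ x, Tendsto (f · x) atTop (𝓝 (Φ x)) := by
  obtain ⟨Φ, hΦ⟩ := h.exists_tendsto
  obtain ⟨Ψ, hΨ⟩ := h.flip.exists_tendsto
  have hΦ' (x : X) : Tendsto (fun n => f (n + 1) x) atTop (𝓝 (Φ x)) :=
    (hΦ x).comp (tendsto_add_atTop_nat 1)
  exact ⟨Φ, ⟨(h.leftInverse_of_tendsto hΦ hΨ).injective,
    (h.flip.leftInverse_of_tendsto hΨ hΦ').surjective⟩, hΦ⟩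

end IsApproxIntertwining

theorem exists_isApproxIntertwining {X Y U V : Type*} [PseudoMetricSpace X] [PseudoMetricSpace Y]
    [TopologicalSpace.SeparableSpace X] [Nonempty X] [TopologicalSpace.SeparableSpace Y]
    [Nonempty Y] [Nonempty U] (f : U → X → Y) (g : V → Y → X)
    (hf : ∀ u, LipschitzWith 1 (f u)) (hg : ∀ v, LipschitzWith 1 (g v))
    (hgf : ∀ u (F : Finset X), ∀ ε > 0, ∃ v, ∀ x ∈ F, dist (g v (f u x)) x < ε)
    (hfg : ∀ v (G : Finset Y), ∀ ε > 0, ∃ u, ∀ y ∈ G, dist (f u (g v y)) y < ε) :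
    ∃ (u : ℕ → U) (v : ℕ → V) (F : ℕ → Set X) (G : ℕ → Set Y),
      IsApproxIntertwining (fun n => f (u n)) (fun n => g (v n)) F G
        (fun n => (1 / 2) ^ n) (fun n => (1 / 2) ^ n) := by
  classical
  obtain ⟨d, hd⟩ := TopologicalSpace.exists_dense_seq X
  obtain ⟨e, he⟩ := TopologicalSpace.exists_dense_seq Y
  choose gInv hgInv using hgf
  choose fInv hfInv using hfg
  have hpos (n : ℕ) : (0 : ℝ) < (1 / 2) ^ n := by positivity
  -- Stage `n` is the pair `s = (uₙ, Fₙ)`; `Gₙ` and `vₙ` are computed from it.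
  let G (n : ℕ) (s : U × Finset X) : Finset Y :=
    s.2.image (f s.1) ∪ (Finset.range n).image e
  let v (n : ℕ) (s : U × Finset X) : V := gInv s.1 s.2 _ (hpos n)
  let next (n : ℕ) (s : U × Finset X) : U × Finset X :=
    (fInv (v n s) (G n s) _ (hpos n),
      (G n s).image (g (v n s)) ∪ (Finset.range (n + 1)).image d)
  let s (n : ℕ) : U × Finset X := Nat.rec (Classical.arbitrary U, ∅) next n
  have hd_mem {k n : ℕ} (hkn : k < n) : d k ∈ (s n).2 := by
    obtain ⟨n, rfl⟩ := Nat.exists_eq_add_one_of_ne_zero (Nat.ne_zero_of_lt hkn)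
    exact Finset.mem_union_right _ (Finset.mem_image_of_mem d (Finset.mem_range.2 hkn))
  refine ⟨fun n => (s n).1, fun n => v n (s n), fun n => (s n).2, fun n => G n (s n),
    { lipschitzWith_left := fun n => hf _
      lipschitzWith_right := fun n => hg _
      mapsTo_left := fun n x hx => Finset.mem_union_left _ (Finset.mem_image_of_mem _ hx)
      mapsTo_right := fun n y hy => Finset.mem_union_left _ (Finset.mem_image_of_mem _ hy)
      dist_right_left_le := fun n x hx => (hgInv _ _ _ (hpos n) x hx).le
      dist_left_right_le := fun n y hy => (hfInv _ _ _ (hpos n) y hy).le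
      summable_left := summable_geometric_two
      summable_right := summable_geometric_two
      dense_left := hd.mono ?_
      dense_right := he.mono ?_ }⟩
  · rintro _ ⟨k, rfl⟩
    exact eventually_atTop.2 ⟨k + 1, fun n hn => hd_mem hn⟩
  · rintro _ ⟨k, rfl⟩
    exact eventually_atTop.2 ⟨k + 1, fun n hn =>
      Finset.mem_union_right _ (Finset.mem_image_of_mem e (Finset.mem_range.2 hn))⟩

namespace Unitization

section unitaryConj

variable {R B : Type*} [CommSemiring R] [StarRing R] [NonUnitalSemiring B] [StarRing B]
  [Module R B] [SMulCommClass R B B] [IsScalarTower R B B] [StarModule R B]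

theorem inr_snd_conjStarAlgAut (u : unitary (Unitization R B)) (b : B) :
    ((Unitary.conjStarAlgAut R _ u (b : Unitization R B)).snd : Unitization R B) =
      Unitary.conjStarAlgAut R _ u b :=
  Unitization.ext (by simp [fst_mul]) rfl

/-- `B` is an ideal of `Unitization R B`, so `u b u⋆` lies in `B`. -/
noncomputable def unitaryConj (u : unitary (Unitization R B)) : B →⋆ₙₐ[R] B where
  toFun b := (Unitary.conjStarAlgAut R _ u (b : Unitization R B)).snd
  map_smul' c b := inr_injective (R := R) <| by
    rw [inr_snd_conjStarAlgAut u (c • b), inr_smul R c b, map_smul, MonoidHom.id_apply, inr_smul,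
      inr_snd_conjStarAlgAut]
  map_zero' := by simp
  map_add' a b := inr_injective (R := R) <| by
    rw [inr_snd_conjStarAlgAut u (a + b), inr_add R a b, map_add, inr_add,
      inr_snd_conjStarAlgAut, inr_snd_conjStarAlgAut]
  map_mul' a b := inr_injective (R := R) <| by
    rw [inr_snd_conjStarAlgAut u (a * b), inr_mul R a b, map_mul, inr_mul,
      inr_snd_conjStarAlgAut, inr_snd_conjStarAlgAut]
  map_star' b := inr_injective (R := R) <| by
    rw [inr_snd_conjStarAlgAut u (star b), inr_star, map_star, inr_star, inr_snd_conjStarAlgAut]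

theorem inr_unitaryConj (u : unitary (Unitization R B)) (b : B) :
    (unitaryConj u b : Unitization R B) = u * b * star (u : Unitization R B) :=
  inr_snd_conjStarAlgAut u b

theorem unitaryConj_mul (u v : unitary (Unitization R B)) :
    unitaryConj (u * v) = (unitaryConj u).comp (unitaryConj v) := by
  ext b
  refine inr_injective (R := R) ?_
  simp only [inr_unitaryConj, NonUnitalStarAlgHom.comp_apply, Submonoid.coe_mul, star_mul,
    mul_assoc]

end unitaryConj

theorem map_unitaryConj {R A B : Type*} [CommSemiring R] [StarRing R]
    [NonUnitalSemiring A] [StarRing A] [Module R A] [SMulCommClass R A A] [IsScalarTower R A A]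
    [StarModule R A] [NonUnitalSemiring B] [StarRing B] [Module R B] [SMulCommClass R B B] [IsScalarTower R B B]
    [StarModule R B] (φ : A →⋆ₙₐ[R] B) (u : unitary (Unitization R A)) (a : A) :
    φ (unitaryConj u a) = unitaryConj ⟨starMap φ u, Unitary.map_mem _ u.2⟩ (φ a) :=
  inr_injective (R := R) <| by
    rw [← starMap_inr φ, inr_unitaryConj, inr_unitaryConj, map_mul, map_mul, map_star,
      starMap_inr]

end Unitization

def nonUnitalStarAlgHomOfTendsto {α R A B : Type*} [Monoid R] [NonUnitalNonAssocSemiring A]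
    [DistribMulAction R A] [Star A] [NonUnitalNonAssocSemiring B] [DistribMulAction R B] [Star B]
    [TopologicalSpace B] [T2Space B] [ContinuousAdd B] [ContinuousMul B] [ContinuousStar B]
    [ContinuousConstSMul R B] {l : Filter α} [l.NeBot] (f : A → B) (g : α → A →⋆ₙₐ[R] B)
    (h : Tendsto (fun i a => g i a) l (𝓝 f)) : A →⋆ₙₐ[R] B where
  toFun := f
  map_smul' c a := tendsto_nhds_unique (tendsto_pi_nhds.1 h (c • a)) <| by
    simpa only [map_smul, MonoidHom.id_apply] using (tendsto_pi_nhds.1 h a).const_smul c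
  map_zero' := tendsto_nhds_unique (tendsto_pi_nhds.1 h 0) <| by
    simpa only [map_zero] using tendsto_const_nhds
  map_add' a b := tendsto_nhds_unique (tendsto_pi_nhds.1 h (a + b)) <| by
    simpa only [map_add] using (tendsto_pi_nhds.1 h a).add (tendsto_pi_nhds.1 h b)
  map_mul' a b := tendsto_nhds_unique (tendsto_pi_nhds.1 h (a * b)) <| by
    simpa only [map_mul] using (tendsto_pi_nhds.1 h a).mul (tendsto_pi_nhds.1 h b)
  map_star' a := tendsto_nhds_unique (tendsto_pi_nhds.1 h (star a)) <| by
    simpa only [map_star] using (tendsto_pi_nhds.1 h a).star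

section CStarAlgebra

variable {A B : Type*} [NonUnitalCStarAlgebra A] [NonUnitalCStarAlgebra B]

theorem NonUnitalStarAlgHom.lipschitzWith_one (φ : A →⋆ₙₐ[ℂ] B) : LipschitzWith 1 φ :=
  AddMonoidHomClass.lipschitz_of_bound_nnnorm φ 1 fun a => by
    simpa only [one_mul] using nnnorm_apply_le φ a

theorem approxUnitarilyEquiv_iff_tendsto {φ ψ : A → B} :
    ApproxUnitarilyEquiv φ ψ ↔ ∃ u : ℕ → unitary (Unitization ℂ B),
      ∀ a, Tendsto (fun n => Unitization.unitaryConj (u n) (φ a)) atTop (𝓝 (ψ a)) := by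
  simp only [ApproxUnitarilyEquiv,
    tendsto_iff_norm_sub_tendsto_zero (f := fun n => Unitization.unitaryConj _ _),
    ← Unitization.norm_inr (𝕜 := ℂ) (_ - ψ _), Unitization.inr_sub, Unitization.inr_unitaryConj]

theorem ApproxUnitarilyEquiv.exists_forall_dist_lt {φ ψ : A → B} (h : ApproxUnitarilyEquiv φ ψ)
    (F : Finset A) {ε : ℝ} (hε : 0 < ε) :
    ∃ u : unitary (Unitization ℂ B),
      ∀ a ∈ F, dist (Unitization.unitaryConj u (φ a)) (ψ a) < ε := by
  obtain ⟨u, hu⟩ := approxUnitarilyEquiv_iff_tendsto.1 h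
  obtain ⟨n, hn⟩ :=
    ((eventually_all_finset F).2 fun a _ => Metric.tendsto_nhds.1 (hu a) ε hε).exists
  exact ⟨u n, hn⟩

theorem ApproxUnitarilyEquiv.exists_forall_dist_unitaryConj_lt {φ : A →⋆ₙₐ[ℂ] B}
    {ψ : B →⋆ₙₐ[ℂ] A} (h : ApproxUnitarilyEquiv (⇑ψ ∘ ⇑φ) id) (w : unitary (Unitization ℂ B))
    (F : Finset A) {ε : ℝ} (hε : 0 < ε) :
    ∃ v : unitary (Unitization ℂ A), ∀ a ∈ F,
      dist (Unitization.unitaryConj v (ψ (Unitization.unitaryConj w (φ a)))) a < ε := by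
  obtain ⟨u, hu⟩ := h.exists_forall_dist_lt F hε
  refine ⟨u * star ⟨Unitization.starMap ψ w, Unitary.map_mem _ w.2⟩, fun a ha => ?_⟩
  rw [Unitization.map_unitaryConj, ← NonUnitalStarAlgHom.comp_apply (Unitization.unitaryConj _),
    ← Unitization.unitaryConj_mul, mul_assoc, Unitary.star_mul_self, mul_one]
  exact hu a ha

theorem ApproxUnitarilyEquiv.exists_starAlgEquiv [TopologicalSpace.SeparableSpace A]
    [TopologicalSpace.SeparableSpace B] {φ : A →⋆ₙₐ[ℂ] B} {ψ : B →⋆ₙₐ[ℂ] A}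
    (hψφ : ApproxUnitarilyEquiv (⇑ψ ∘ ⇑φ) id) (hφψ : ApproxUnitarilyEquiv (⇑φ ∘ ⇑ψ) id) :
    ∃ e : A ≃⋆ₐ[ℂ] B, ApproxUnitarilyEquiv φ e := by
  obtain ⟨u, v, F, G, h⟩ := exists_isApproxIntertwining
    (fun u => (Unitization.unitaryConj u).comp φ) (fun v => (Unitization.unitaryConj v).comp ψ)
    (fun _ => NonUnitalStarAlgHom.lipschitzWith_one _)
    (fun _ => NonUnitalStarAlgHom.lipschitzWith_one _)
    (fun _ _ _ => hψφ.exists_forall_dist_unitaryConj_lt _ _)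
    (fun _ _ _ => hφψ.exists_forall_dist_unitaryConj_lt _ _)
  obtain ⟨Φ, hΦ, hlim⟩ := h.exists_bijective_tendsto
  let θ := nonUnitalStarAlgHomOfTendsto Φ _ (tendsto_pi_nhds.2 hlim)
  exact ⟨StarAlgEquiv.ofBijective θ hΦ, approxUnitarilyEquiv_iff_tendsto.2 ⟨u, hlim⟩⟩

end CStarAlgebra

/-- If `σ̃ : A → A` is a *-homomorphism of a separable C*-algebra whose square is approximately
inner (approximately unitarily equivalent to `id_A`), then `σ̃` is approximately unitarily
equivalent to an automorphism of `A`. -/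
theorem approx_inner_square_implies_close_to_automorphism {A : Type*}
    [NonUnitalCStarAlgebra A] [TopologicalSpace.SeparableSpace A]
    (σ : A →⋆ₙₐ[ℂ] A)
    (h : ApproxUnitarilyEquiv (⇑σ ∘ ⇑σ) (id : A → A)) :
    ∃ e : A ≃⋆ₐ[ℂ] A, ApproxUnitarilyEquiv ⇑σ ⇑e :=
  h.exists_starAlgEquiv h
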